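/- Let ι be a finite nonempty type, H a countable type, and π a probability mass function on ι × H with marginal π_M(m) = Σ_h π(m,h) > 0 for every m and conditionals π(h|m) = π(m,h)/π_M(m). For each m ∈ ι let Q_{H|m} be a pmf on H with KL(Q_{H|m}‖π(·|m)) < ∞. Define the weights ᾱ_m = π_M(m)·exp(−KL(Q_{H|m}‖π(·|m))) / Σ_{j∈ι} π_M(j)·exp(−KL(Q_{H|j}‖π(·|j))). Then for every pmf Q_M on ι, KL(Q_ᾱ‖π) ≤ KL(Q‖π), where Q(m,h) = Q_M(m)·Q_{H|m}(h) and Q_ᾱ(m,h) = ᾱ_m·Q_{H|m}(h); i.e., ᾱ minimizes Q_M ↦ KL(Q_M ⊗ Q_{H|·}‖π) over all pmfs Q_M on ι. -/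

import Mathlib

open scoped ENNReal Classical

/-- Kullback–Leibler divergence between two probability mass functions on a countable
type: `KL(p‖q) = ∑ x, p x * log (p x / q x) ∈ [0,∞]`, with the conventions
`0 * log (0 / q x) = 0` (automatic since the factor `p x` vanishes) and
`KL(p‖q) = ∞` when `p` is not absolutely continuous with respect to `q`
(or when the series fails to be summable, in which case the sum is genuinely `+∞`
since the negative parts of a relative-entropy series are always summable). -/
noncomputable def klDiv {X : Type*} (p q : PMF X) : ℝ≥0∞ :=
  if (∀ x, q x = 0 → p x = 0) ∧
      Summable (fun x => (p x).toReal * Real.log ((p x).toReal / (q x).toReal))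
  then ENNReal.ofReal (∑' x, (p x).toReal * Real.log ((p x).toReal / (q x).toReal))
  else ⊤

/-- The joint pmf on `ι × H` obtained from a pmf `QM` on `ι` and a family of conditionals
`QH m` on `H`; its value at `(m, h)` is `QM m * QH m h`. -/
noncomputable def jointPMF {ι H : Type*} (QM : PMF ι) (QH : ι → PMF H) : PMF (ι × H) :=
  QM.bind fun m => (QH m).map fun h => (m, h)

/-!
Because `π` factors as `πM ⊗ π(·|m)`, the chain rule for relative entropy gives
`KL(QM ⊗ QH ‖ π) = ∑ m, QM m * (log (QM m / πM m) + K m)` with `K m = KL(QH m ‖ π(·|m))`.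
With `Z = ∑ j, πM j * exp (-K j)` and `ᾱ = πM * exp (-K) / Z` this is `KL(QM ‖ ᾱ) - log Z`,
and Gibbs' inequality `KL(QM ‖ ᾱ) ≥ 0 = KL(ᾱ ‖ ᾱ)` finishes the proof.
-/

section RelativeEntropy

open Real

lemma summable_prod_of_finite {ι H : Type*} [Finite ι] {f : ι × H → ℝ}
    (hf : ∀ m, Summable fun h => f (m, h)) : Summable f :=
  Summable.of_abs <| (summable_prod_of_nonneg fun _ => abs_nonneg _).2
    ⟨fun m => (hf m).abs, Summable.of_finite⟩

lemma sub_le_mul_log_div {a b : ℝ} (ha : 0 ≤ a) (hb : 0 ≤ b) (hab : b = 0 → a = 0) :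
    a - b ≤ a * log (a / b) := by
  rcases ha.eq_or_lt with rfl | ha
  · simpa using hb
  have hb : 0 < b := hb.lt_of_ne fun h => ha.ne' (hab h.symm)
  have := mul_le_mul_of_nonneg_left (one_sub_inv_le_log_of_pos (div_pos ha hb)) ha.le
  rwa [inv_div, mul_one_sub, mul_div_cancel₀ _ ha.ne'] at this

lemma tsum_mul_log_div_nonneg {X : Type*} {f g : X → ℝ} (hf : 0 ≤ f) (hg : 0 ≤ g)
    (hac : ∀ x, g x = 0 → f x = 0) (hfs : Summable f) (hgs : Summable g)
    (hfg : ∑' x, g x ≤ ∑' x, f x) (hs : Summable fun x => f x * log (f x / g x)) :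
    0 ≤ ∑' x, f x * log (f x / g x) := by
  have := (hfs.sub hgs).tsum_le_tsum (fun x => sub_le_mul_log_div (hf x) (hg x) (hac x)) hs
  rw [hfs.tsum_sub hgs] at this
  linarith

lemma mul_mul_log_div_mul {a b c d : ℝ} (hc : c ≠ 0) (hd : b ≠ 0 → d ≠ 0) :
    a * b * log (a * b / (c * d)) = a * log (a / c) * b + a * (b * log (b / d)) := by
  rcases eq_or_ne a 0 with rfl | ha
  · simp
  rcases eq_or_ne b 0 with rfl | hb
  · simp
  rw [log_div (mul_ne_zero ha hb) (mul_ne_zero hc (hd hb)), log_mul ha hb, log_mul hc (hd hb),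
    log_div ha hc, log_div hb (hd hb)]
  ring

namespace PMF

variable {X : Type*} (p : PMF X)

lemma hasSum_toReal : HasSum (fun x => (p x).toReal) 1 := by
  convert (ENNReal.summable_toReal (p.tsum_coe ▸ ENNReal.one_ne_top)).hasSum
  rw [← ENNReal.tsum_toReal_eq p.apply_ne_top, p.tsum_coe, ENNReal.toReal_one]

lemma toReal_eq_zero_iff {x : X} : (p x).toReal = 0 ↔ p x = 0 := by
  simp [ENNReal.toReal_eq_zero_iff, p.apply_ne_top x]

lemma sum_toReal [Fintype X] : ∑ x, (p x).toReal = 1 :=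
  (hasSum_fintype _).unique p.hasSum_toReal

end PMF

lemma jointPMF_apply {ι H : Type*} (QM : PMF ι) (QH : ι → PMF H) (m : ι) (h : H) :
    jointPMF QM QH (m, h) = QM m * QH m h := by
  rw [jointPMF, PMF.bind_apply, tsum_eq_single m fun m' hm' => ?_]
  · rw [PMF.map_apply, tsum_eq_single h fun h' hh' => by simp [Ne.symm hh']]
    simp
  · simp [PMF.map_apply, Ne.symm hm']

section KLDivergence

variable {X : Type*} {p q : PMF X}

lemma klDiv_lt_top_iff : klDiv p q < ⊤ ↔ (∀ x, q x = 0 → p x = 0) ∧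
    Summable (fun x => (p x).toReal * log ((p x).toReal / (q x).toReal)) := by
  unfold klDiv
  split_ifs with h <;> simpa using h

lemma toReal_klDiv (h : klDiv p q < ⊤) :
    (klDiv p q).toReal = ∑' x, (p x).toReal * log ((p x).toReal / (q x).toReal) := by
  obtain ⟨hac, hs⟩ := klDiv_lt_top_iff.1 h
  rw [klDiv, if_pos ⟨hac, hs⟩, ENNReal.toReal_ofReal]
  refine tsum_mul_log_div_nonneg (fun _ => ENNReal.toReal_nonneg) (fun _ => ENNReal.toReal_nonneg)
    (fun x hx => p.toReal_eq_zero_iff.2 (hac x (q.toReal_eq_zero_iff.1 hx)))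
    p.hasSum_toReal.summable q.hasSum_toReal.summable
    (by rw [p.hasSum_toReal.tsum_eq, q.hasSum_toReal.tsum_eq]) hs

end KLDivergence

section GibbsVariationalPrinciple

variable {ι : Type*} [Fintype ι]

/-- With `p = πM`, `K m = KL(QH m ‖ π(·|m))` and `q = QM`, this is the paper's
`KL(QM ‖ πM) + ∑ m, QM m * KL(QH m ‖ π(·|m))`. -/
noncomputable def freeEnergy (p K q : ι → ℝ) : ℝ :=
  ∑ m, (q m * log (q m / p m) + q m * K m)

noncomputable def gibbsWeights (p K : ι → ℝ) (m : ι) : ℝ :=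
  p m * exp (-K m) / ∑ j, p j * exp (-K j)

variable [Nonempty ι] {p : ι → ℝ} (K : ι → ℝ) (hp : ∀ m, 0 < p m)
include hp

lemma sum_mul_exp_neg_pos : 0 < ∑ j, p j * exp (-K j) :=
  Finset.sum_pos (fun j _ => mul_pos (hp j) (exp_pos _)) Finset.univ_nonempty

lemma gibbsWeights_pos (m : ι) : 0 < gibbsWeights p K m :=
  div_pos (mul_pos (hp m) (exp_pos _)) (sum_mul_exp_neg_pos K hp)

lemma sum_gibbsWeights : ∑ m, gibbsWeights p K m = 1 := by
  simp only [gibbsWeights, ← Finset.sum_div]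
  exact div_self (sum_mul_exp_neg_pos K hp).ne'

lemma mul_log_div_add_mul_eq (x : ℝ) (m : ι) :
    x * log (x / p m) + x * K m =
      x * log (x / gibbsWeights p K m) - x * log (∑ j, p j * exp (-K j)) := by
  rcases eq_or_ne x 0 with rfl | hx
  · simp
  have hZ := (sum_mul_exp_neg_pos K hp).ne'
  rw [log_div hx (hp m).ne', log_div hx (gibbsWeights_pos K hp m).ne', gibbsWeights,
    log_div (mul_pos (hp m) (exp_pos _)).ne' hZ, log_mul (hp m).ne' (exp_pos _).ne', log_exp]
  ring

lemma freeEnergy_eq {q : ι → ℝ} (hq : ∑ m, q m = 1) :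
    freeEnergy p K q =
      ∑ m, q m * log (q m / gibbsWeights p K m) - log (∑ j, p j * exp (-K j)) := by
  simp only [freeEnergy, mul_log_div_add_mul_eq K hp, Finset.sum_sub_distrib,
    ← Finset.sum_mul, hq, one_mul]

lemma freeEnergy_gibbsWeights_le {q : ι → ℝ} (hq₀ : ∀ m, 0 ≤ q m) (hq : ∑ m, q m = 1) :
    freeEnergy p K (gibbsWeights p K) ≤ freeEnergy p K q := by
  have ha := gibbsWeights_pos K hp
  have hgibbs : 0 ≤ ∑ m, q m * log (q m / gibbsWeights p K m) := by
    have := Finset.sum_le_sum (s := Finset.univ) fun m _ =>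
      sub_le_mul_log_div (hq₀ m) (ha m).le fun h => absurd h (ha m).ne'
    rwa [Finset.sum_sub_distrib, hq, sum_gibbsWeights K hp, sub_self] at this
  rw [freeEnergy_eq K hp hq, freeEnergy_eq K hp (sum_gibbsWeights K hp)]
  simp only [div_self (ha _).ne', log_one, mul_zero, Finset.sum_const_zero]
  linarith

end GibbsVariationalPrinciple

theorem klDiv_jointPMF {ι H : Type*} [Fintype ι] (Q P : PMF ι) (hP : ∀ m, P m ≠ 0)
    (QH PH : ι → PMF H) (hfin : ∀ m, klDiv (QH m) (PH m) < ⊤) :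
    klDiv (jointPMF Q QH) (jointPMF P PH) = ENNReal.ofReal (freeEnergy (fun m => (P m).toReal)
      (fun m => (klDiv (QH m) (PH m)).toReal) (fun m => (Q m).toReal)) := by
  choose hac hs using fun m => klDiv_lt_top_iff.1 (hfin m)
  have hterm : ∀ m x, (jointPMF Q QH (m, x)).toReal *
        log ((jointPMF Q QH (m, x)).toReal / (jointPMF P PH (m, x)).toReal) =
      (Q m).toReal * log ((Q m).toReal / (P m).toReal) * (QH m x).toReal +
        (Q m).toReal * ((QH m x).toReal * log ((QH m x).toReal / (PH m x).toReal)) := by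
    intro m x
    simp only [jointPMF_apply, ENNReal.toReal_mul]
    refine mul_mul_log_div_mul (mt P.toReal_eq_zero_iff.1 (hP m)) ?_
    exact mt fun h => (QH m).toReal_eq_zero_iff.2 (hac m x ((PH m).toReal_eq_zero_iff.1 h))
  have hfiber : ∀ m, HasSum (fun x => (jointPMF Q QH (m, x)).toReal *
        log ((jointPMF Q QH (m, x)).toReal / (jointPMF P PH (m, x)).toReal))
      ((Q m).toReal * log ((Q m).toReal / (P m).toReal) +
        (Q m).toReal * (klDiv (QH m) (PH m)).toReal) := by
    intro m
    simp only [hterm, toReal_klDiv (hfin m)]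
    simpa using ((QH m).hasSum_toReal.mul_left _).add ((hs m).hasSum.mul_left (Q m).toReal)
  have hac' : ∀ y, jointPMF P PH y = 0 → jointPMF Q QH y = 0 := by
    rintro ⟨m, x⟩
    simp only [jointPMF_apply, mul_eq_zero, hP m, false_or]
    exact fun h => Or.inr (hac m x h)
  have hsum : Summable fun y => (jointPMF Q QH y).toReal *
      log ((jointPMF Q QH y).toReal / (jointPMF P PH y).toReal) :=
    summable_prod_of_finite fun m => (hfiber m).summable
  rw [klDiv, if_pos ⟨hac', hsum⟩, hsum.tsum_prod' fun m => (hfiber m).summable, tsum_fintype]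
  exact congrArg _ (Finset.sum_congr rfl fun m _ => (hfiber m).tsum_eq)

end RelativeEntropy

theorem variational_weights_optimal_general {ι H : Type*} [Fintype ι] [Nonempty ι]
    (π : PMF (ι × H))
    (πM : PMF ι)
    (hπM_pos : ∀ m, 0 < πM m)
    (cond : ι → PMF H) (hcond : ∀ m h, cond m h = π (m, h) / πM m)
    (QH : ι → PMF H) (hfin : ∀ m, klDiv (QH m) (cond m) < ⊤)
    (αbar : PMF ι)
    (hαbar : ∀ m, αbar m = ENNReal.ofReal
      ((πM m).toReal * Real.exp (- (klDiv (QH m) (cond m)).toReal) /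
        ∑ j, (πM j).toReal * Real.exp (- (klDiv (QH j) (cond j)).toReal)))
    (QM : PMF ι) :
    klDiv (jointPMF αbar QH) π ≤ klDiv (jointPMF QM QH) π := by
  have hπ : π = jointPMF πM cond := PMF.ext fun ⟨m, h⟩ => by
    rw [jointPMF_apply, hcond, ENNReal.mul_div_cancel (hπM_pos m).ne' (πM.apply_ne_top m)]
  have hp : ∀ m, 0 < (πM m).toReal := fun m =>
    ENNReal.toReal_pos (hπM_pos m).ne' (πM.apply_ne_top m)
  set K := fun m => (klDiv (QH m) (cond m)).toReal
  have hαbar' : (fun m => (αbar m).toReal) = gibbsWeights (fun m => (πM m).toReal) K :=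
    funext fun m => by rw [hαbar]; exact ENNReal.toReal_ofReal (gibbsWeights_pos K hp m).le
  rw [hπ, klDiv_jointPMF _ _ (fun m => (hπM_pos m).ne') _ _ hfin,
    klDiv_jointPMF _ _ (fun m => (hπM_pos m).ne') _ _ hfin, hαbar']
  exact ENNReal.ofReal_le_ofReal
    (freeEnergy_gibbsWeights_le K hp (fun _ => ENNReal.toReal_nonneg) QM.sum_toReal)

/-- **Proposition 1 of the paper (optimality of the variational weights), discrete
version.** Let `π` be a pmf on `ι × H` with positive marginal `πM` and conditionals
`cond m`. For a family `QH m` of pmfs on `H` with `KL(QH m‖cond m) < ∞`, the weights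
`ᾱ m = πM m * exp (- KL(QH m‖cond m)) / ∑ j, πM j * exp (- KL(QH j‖cond j))`
minimize `QM ↦ KL(QM ⊗ QH‖π)` over all pmfs `QM` on `ι`, where
`(QM ⊗ QH) (m, h) = QM m * QH m h`. -/
theorem variational_weights_optimal {ι H : Type*} [Fintype ι] [Nonempty ι] [Countable H]
    (π : PMF (ι × H))
    (πM : PMF ι) (hπM : ∀ m, πM m = ∑' h, π (m, h))
    (hπM_pos : ∀ m, 0 < πM m)
    (cond : ι → PMF H) (hcond : ∀ m h, cond m h = π (m, h) / πM m)
    (QH : ι → PMF H) (hfin : ∀ m, klDiv (QH m) (cond m) < ⊤)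
    (αbar : PMF ι)
    (hαbar : ∀ m, αbar m = ENNReal.ofReal
      ((πM m).toReal * Real.exp (- (klDiv (QH m) (cond m)).toReal) /
        ∑ j, (πM j).toReal * Real.exp (- (klDiv (QH j) (cond j)).toReal)))
    (QM : PMF ι) :
    klDiv (jointPMF αbar QH) π ≤ klDiv (jointPMF QM QH) π :=
  variational_weights_optimal_general π πM hπM_pos cond hcond QH hfin αbar hαbar QM
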